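/- There exists a universal constant C > 0 with the following property: let (Ω, F, P) be a probability space with filtration (F_ℓ)_{ℓ≥0}, and let (X_ℓ)_{ℓ≥1} be a martingale difference sequence with respect to (F_ℓ) satisfying |X_ℓ| ≤ R almost surely for all ℓ. Then for any δ′ ∈ (0,1) and any η ∈ (0, 1/R), with probability at least 1 − δ′, simultaneously for all natural numbers t ≥ 1, Σ_{ℓ=1}^t X_ℓ ≤ η·Σ_{ℓ=1}^t E[X_ℓ² | F_{ℓ−1}] + C·log(t/δ′)/η. -/

import Mathlib

/-!
For `0 ≤ η` with `η R ≤ 1`, the bound `exp u ≤ 1 + u + u²` for `u ≤ 1` and the martingale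
difference property give `E_ℓ[exp (η X_ℓ)] ≤ 1 + η² E_ℓ[X_ℓ²] ≤ exp (η² E_ℓ[X_ℓ²])`. Hence
`exp (η Σ_{ℓ ≤ t} X_ℓ - η² Σ_{ℓ ≤ t} E_ℓ[X_ℓ²])` is a nonnegative supermartingale started at `1`,
and Ville's maximal inequality bounds the probability that it ever reaches `1/δ'` by `δ'`.
Off that event, taking logarithms gives the claim with `C = 1` for every `t ≥ 1` at once,
since `log (1/δ') ≤ log (t/δ')`.
-/

open MeasureTheory ProbabilityTheory Finset

lemma Real.exp_le_one_add_add_sq {u : ℝ} (hu : u ≤ 1) : Real.exp u ≤ 1 + u + u ^ 2 := by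
  rcases le_or_gt (-1) u with h | h
  · have := Real.abs_exp_sub_one_sub_id_le (abs_le.2 ⟨h, hu⟩)
    linarith [le_abs_self (Real.exp u - 1 - u)]
  · nlinarith [Real.exp_le_one_iff.2 (by linarith : u ≤ 0)]

lemma Real.le_mul_add_log_div_of_exp_lt {η s v y : ℝ} (hη : 0 < η)
    (h : Real.exp (η * s - η ^ 2 * v) < y) : s ≤ η * v + Real.log y / η := by
  have hlog : η * s - η ^ 2 * v < Real.log y :=
    (Real.lt_log_iff_exp_lt ((Real.exp_pos _).trans h)).2 h
  rw [← sub_le_iff_le_add', le_div_iff₀ hη]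
  nlinarith

namespace MeasureTheory

section Ville

variable {Ω : Type*} {m0 : MeasurableSpace Ω} {P : Measure Ω} [IsFiniteMeasure P]
  {𝓕 : Filtration ℕ m0} {f : ℕ → Ω → ℝ} {a : ℝ}

theorem Supermartingale.measure_exists_le_ge_le (hf : Supermartingale f 𝓕 P) (hnonneg : 0 ≤ f)
    (ha : 0 < a) (n : ℕ) :
    P {ω | ∃ k ≤ n, a ≤ f k ω} ≤ ENNReal.ofReal ((∫ ω, f 0 ω ∂P) / a) := by
  set τ : Ω → WithTop ℕ := fun ω => (hittingBtwn f (Set.Ici a) 0 n ω : ℕ)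
  have hτ : IsStoppingTime 𝓕 τ :=
    Adapted.isStoppingTime_hittingBtwn (fun i => (hf.stronglyAdapted i).measurable)
      measurableSet_Ici
  have hτn : ∀ ω, τ ω ≤ n := fun ω => WithTop.coe_le_coe.2 (hittingBtwn_le ω)
  have hτ_int : Integrable (stoppedValue f τ) P :=
    integrable_stoppedValue ℕ hτ hf.integrable hτn
  have hsub : {ω | ∃ k ≤ n, a ≤ f k ω} ⊆ {ω | a ≤ stoppedValue f τ ω} := by
    rintro ω ⟨k, hk, hak⟩
    exact stoppedValue_hittingBtwn_mem ⟨k, ⟨Nat.zero_le _, hk⟩, hak⟩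
  have hmarkov : a * P.real {ω | a ≤ stoppedValue f τ ω} ≤ ∫ ω, stoppedValue f τ ω ∂P :=
    mul_meas_ge_le_integral_of_nonneg (ae_of_all _ fun ω => hnonneg _ _) hτ_int a
  have hstop : ∫ ω, stoppedValue f τ ω ∂P ≤ ∫ ω, f 0 ω ∂P := by
    have := hf.neg.expected_stoppedValue_mono (isStoppingTime_const 𝓕 0) hτ
      (fun ω => WithTop.coe_le_coe.2 (Nat.zero_le _)) hτn
    change ∫ ω, -f 0 ω ∂P ≤ ∫ ω, -stoppedValue f τ ω ∂P at this
    rwa [integral_neg, integral_neg, neg_le_neg_iff] at this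
  calc P _ ≤ P {ω | a ≤ stoppedValue f τ ω} := measure_mono hsub
    _ = ENNReal.ofReal (P.real {ω | a ≤ stoppedValue f τ ω}) :=
      (ofReal_measureReal (measure_ne_top _ _)).symm
    _ ≤ ENNReal.ofReal ((∫ ω, f 0 ω ∂P) / a) :=
      ENNReal.ofReal_le_ofReal (by rw [le_div_iff₀ ha]; linarith)

theorem Supermartingale.measure_exists_ge_le (hf : Supermartingale f 𝓕 P) (hnonneg : 0 ≤ f)
    (ha : 0 < a) : P {ω | ∃ t, a ≤ f t ω} ≤ ENNReal.ofReal ((∫ ω, f 0 ω ∂P) / a) := by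
  have hunion : {ω | ∃ t, a ≤ f t ω} = ⋃ n, {ω | ∃ k ≤ n, a ≤ f k ω} := by
    ext ω
    simp only [Set.mem_ofPred_eq, Set.mem_iUnion]
    exact ⟨fun ⟨t, ht⟩ => ⟨t, t, le_rfl, ht⟩, fun ⟨_, k, _, hk⟩ => ⟨k, hk⟩⟩
  have hmono : Monotone fun n => {ω | ∃ k ≤ n, a ≤ f k ω} :=
    fun _ _ hij _ ⟨k, hk, hak⟩ => ⟨k, hk.trans hij, hak⟩
  rw [hunion, hmono.measure_iUnion]
  exact iSup_le (hf.measure_exists_le_ge_le hnonneg ha)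

end Ville

section ConditionalMGF

variable {Ω : Type*} {m m0 : MeasurableSpace Ω} {P : Measure Ω} [IsFiniteMeasure P]
  {X : Ω → ℝ} {R : ℝ}

lemma integrable_exp_mul_of_abs_le (hXm : AEStronglyMeasurable X P)
    (hXR : ∀ᵐ ω ∂P, |X ω| ≤ R) (η : ℝ) : Integrable (fun ω => Real.exp (η * X ω)) P := by
  refine Integrable.of_bound (Real.continuous_exp.comp_aestronglyMeasurable (hXm.const_mul η))
    (Real.exp (|η| * R)) ?_
  filter_upwards [hXR] with ω hω
  rw [Real.norm_of_nonneg (Real.exp_pos _).le, Real.exp_le_exp]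
  calc η * X ω ≤ |η| * |X ω| := by rw [← abs_mul]; exact le_abs_self _
    _ ≤ |η| * R := mul_le_mul_of_nonneg_left hω (abs_nonneg η)

theorem condExp_exp_mul_le (hm : m ≤ m0) {η : ℝ} (hXm : AEStronglyMeasurable X P)
    (hXR : ∀ᵐ ω ∂P, |X ω| ≤ R) (hX0 : P[X|m] =ᵐ[P] 0) (hη : 0 ≤ η) (hηR : η * R ≤ 1) :
    P[fun ω => Real.exp (η * X ω)|m] ≤ᵐ[P]
      fun ω => Real.exp (η ^ 2 * P[fun ω => X ω ^ 2|m] ω) := by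
  set X2 : Ω → ℝ := fun ω => X ω ^ 2
  have hX_int : Integrable X P := Integrable.of_bound hXm R (by simpa only [Real.norm_eq_abs])
  have hX2_int : Integrable X2 P := Integrable.of_bound (hXm.pow 2) (R ^ 2) <| by
    filter_upwards [hXR] with ω hω
    rw [Real.norm_eq_abs, abs_pow]
    exact pow_le_pow_left₀ (abs_nonneg _) hω 2
  set W : Ω → ℝ := (fun _ => 1) + η • X + η ^ 2 • X2
  have hW_int : Integrable W P :=
    ((integrable_const 1).add (hX_int.smul η)).add (hX2_int.smul (η ^ 2))
  have hexp_le_W : (fun ω => Real.exp (η * X ω)) ≤ᵐ[P] W := by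
    filter_upwards [hXR] with ω hω
    have hu : η * X ω ≤ 1 :=
      (mul_le_mul_of_nonneg_left ((le_abs_self _).trans hω) hη).trans hηR
    calc Real.exp (η * X ω) ≤ 1 + η * X ω + (η * X ω) ^ 2 := Real.exp_le_one_add_add_sq hu
      _ = W ω := by simp only [W, X2, Pi.add_apply, Pi.smul_apply, smul_eq_mul]; ring
  have hcondW : P[W|m] =ᵐ[P] fun ω => 1 + η ^ 2 * P[X2|m] ω := by
    filter_upwards [condExp_add ((integrable_const 1).add (hX_int.smul η)) (hX2_int.smul (η ^ 2)) m,
      condExp_add (integrable_const 1) (hX_int.smul η) m, condExp_smul (μ := P) η X m,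
      condExp_smul (μ := P) (η ^ 2) X2 m, hX0] with ω h1 h2 h3 h4 h5
    simp [W, h1, h2, h3, h4, h5, condExp_const hm]
  filter_upwards [condExp_mono (integrable_exp_mul_of_abs_le hXm hXR η) hW_int hexp_le_W, hcondW]
    with ω hmono hW
  rw [hW] at hmono
  linarith [Real.add_one_le_exp (η ^ 2 * P[X2|m] ω)]

end ConditionalMGF

end MeasureTheory

section FreedmanProcess

variable {Ω : Type*}

noncomputable def freedmanProcess (η : ℝ) (X V : ℕ → Ω → ℝ) (t : ℕ) (ω : Ω) : ℝ :=
  Real.exp (η * ∑ ℓ ∈ Icc 1 t, X ℓ ω - η ^ 2 * ∑ ℓ ∈ Icc 1 t, V ℓ ω)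

variable {η R : ℝ} {X V : ℕ → Ω → ℝ}

@[simp]
lemma freedmanProcess_zero : freedmanProcess η X V 0 = fun _ => 1 := by
  ext ω
  simp [freedmanProcess]

lemma freedmanProcess_succ (t : ℕ) (ω : Ω) :
    freedmanProcess η X V (t + 1) ω = freedmanProcess η X V t ω *
      Real.exp (-(η ^ 2 * V (t + 1) ω)) * Real.exp (η * X (t + 1) ω) := by
  simp only [freedmanProcess, ← Real.exp_add]
  rw [sum_Icc_succ_top (Nat.le_add_left 1 t), sum_Icc_succ_top (Nat.le_add_left 1 t)]
  ring_nf

lemma freedmanProcess_pos (t : ℕ) (ω : Ω) : 0 < freedmanProcess η X V t ω := Real.exp_pos _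

lemma freedmanProcess_le_exp {ω : Ω} (hXR : ∀ ℓ, |X ℓ ω| ≤ R) (hV : ∀ ℓ, 0 ≤ V ℓ ω)
    (hη : 0 ≤ η) (t : ℕ) : freedmanProcess η X V t ω ≤ Real.exp (η * (t * R)) := by
  have hX : ∑ ℓ ∈ Icc 1 t, X ℓ ω ≤ t * R := by
    simpa using sum_le_card_nsmul (Icc 1 t) (X · ω) R fun ℓ _ => (le_abs_self _).trans (hXR ℓ)
  have hV : 0 ≤ ∑ ℓ ∈ Icc 1 t, V ℓ ω := sum_nonneg fun ℓ _ => hV ℓ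
  rw [freedmanProcess, Real.exp_le_exp]
  nlinarith [sq_nonneg η]

variable {m0 : MeasurableSpace Ω} {𝓕 : Filtration ℕ m0}

lemma stronglyAdapted_freedmanProcess (hX : ∀ ℓ, StronglyMeasurable[𝓕 ℓ] (X ℓ))
    (hV : ∀ ℓ, StronglyMeasurable[𝓕 ℓ] (V ℓ)) : StronglyAdapted 𝓕 (freedmanProcess η X V) := by
  intro t
  refine Real.continuous_exp.comp_stronglyMeasurable (.sub ?_ ?_)
  · exact (stronglyMeasurable_fun_sum _ fun ℓ hℓ =>
      (hX ℓ).mono (𝓕.mono (mem_Icc.mp hℓ).2)).const_mul η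
  · exact (stronglyMeasurable_fun_sum _ fun ℓ hℓ =>
      (hV ℓ).mono (𝓕.mono (mem_Icc.mp hℓ).2)).const_mul _

variable {P : Measure Ω} [IsFiniteMeasure P]

theorem supermartingale_freedmanProcess (hX : ∀ ℓ, StronglyMeasurable[𝓕 ℓ] (X ℓ))
    (hX0 : ∀ ℓ, 1 ≤ ℓ → P[X ℓ|𝓕 (ℓ - 1)] =ᵐ[P] 0) (hXR : ∀ ℓ, ∀ᵐ ω ∂P, |X ℓ ω| ≤ R)
    (hη : 0 ≤ η) (hηR : η * R ≤ 1) :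
    Supermartingale (freedmanProcess η X fun ℓ => P[fun ω => X ℓ ω ^ 2|𝓕 (ℓ - 1)]) 𝓕 P := by
  set V : ℕ → Ω → ℝ := fun ℓ => P[fun ω => X ℓ ω ^ 2|𝓕 (ℓ - 1)]
  have hV : ∀ ℓ, StronglyMeasurable[𝓕 (ℓ - 1)] (V ℓ) := fun ℓ => stronglyMeasurable_condExp
  have hadapted : StronglyAdapted 𝓕 (freedmanProcess η X V) :=
    stronglyAdapted_freedmanProcess hX fun ℓ => (hV ℓ).mono (𝓕.mono (ℓ.sub_le 1))
  have hint : ∀ t, Integrable (freedmanProcess η X V t) P := by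
    intro t
    refine Integrable.of_bound ((hadapted t).mono (𝓕.le t)).aestronglyMeasurable
      (Real.exp (η * (t * R))) ?_
    filter_upwards [ae_all_iff.2 hXR, ae_all_iff.2 fun ℓ =>
      condExp_nonneg (f := fun ω => X ℓ ω ^ 2) (ae_of_all _ fun ω => sq_nonneg _)] with ω hXω hVω
    rw [Real.norm_of_nonneg (freedmanProcess_pos t ω).le]
    exact freedmanProcess_le_exp hXω hVω hη t
  refine supermartingale_nat hadapted hint fun t => ?_
  have hXm : AEStronglyMeasurable (X (t + 1)) P :=
    ((hX (t + 1)).mono (𝓕.le _)).aestronglyMeasurable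
  set G : Ω → ℝ := fun ω => freedmanProcess η X V t ω * Real.exp (-(η ^ 2 * V (t + 1) ω))
  have hG : StronglyMeasurable[𝓕 t] G := (hadapted t).mul
    (Real.continuous_exp.comp_stronglyMeasurable ((hV (t + 1)).const_mul _).neg)
  have hsplit : freedmanProcess η X V (t + 1) = G * fun ω => Real.exp (η * X (t + 1) ω) :=
    funext (freedmanProcess_succ t)
  rw [hsplit]
  filter_upwards [condExp_mul_of_stronglyMeasurable_left hG (hsplit ▸ hint (t + 1))
      (integrable_exp_mul_of_abs_le hXm (hXR (t + 1)) η),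
    condExp_exp_mul_le (𝓕.le t) hXm (hXR (t + 1)) (hX0 (t + 1) (Nat.le_add_left 1 t)) hη hηR]
    with ω hpull hmgf
  calc _ = G ω * P[fun ω => Real.exp (η * X (t + 1) ω)|𝓕 t] ω := hpull
    _ ≤ G ω * Real.exp (η ^ 2 * V (t + 1) ω) :=
      mul_le_mul_of_nonneg_left hmgf (mul_pos (freedmanProcess_pos t ω) (Real.exp_pos _)).le
    _ = freedmanProcess η X V t ω := by
      rw [mul_assoc, ← Real.exp_add, neg_add_cancel, Real.exp_zero, mul_one]

end FreedmanProcess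

/-- Anytime Freedman inequality: there is a universal constant `C > 0` such that for any
martingale difference sequence `(X_ℓ)` with `|X_ℓ| ≤ R` a.s., any `δ' ∈ (0,1)` and
`η ∈ (0, 1/R)`, with probability at least `1 − δ'`, simultaneously for all `t ≥ 1`,
`Σ_{ℓ=1}^t X_ℓ ≤ η·Σ_{ℓ=1}^t E[X_ℓ² | F_{ℓ−1}] + C·log(t/δ')/η`. -/
theorem stmt_7 :
    ∃ C : ℝ, 0 < C ∧
      ∀ (Ω : Type) [m0 : MeasurableSpace Ω] (P : Measure Ω) [IsProbabilityMeasure P]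
        (𝓕 : Filtration ℕ m0) (R : ℝ) (X : ℕ → Ω → ℝ),
        (∀ ℓ, StronglyMeasurable[𝓕 ℓ] (X ℓ)) →
        (∀ ℓ, Integrable (X ℓ) P) →
        (∀ ℓ, 1 ≤ ℓ → P[X ℓ | 𝓕 (ℓ - 1)] =ᵐ[P] 0) →
        (∀ ℓ, ∀ᵐ ω ∂P, |X ℓ ω| ≤ R) →
        ∀ δ' η : ℝ, 0 < δ' → δ' < 1 → 0 < η → η < 1 / R →
        ENNReal.ofReal (1 - δ') ≤
          P {ω | ∀ t : ℕ, 1 ≤ t →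
            ∑ ℓ ∈ Finset.Icc 1 t, X ℓ ω ≤
              η * ∑ ℓ ∈ Finset.Icc 1 t, (P[fun ω' => (X ℓ ω') ^ 2 | 𝓕 (ℓ - 1)]) ω +
                C * Real.log ((t : ℝ) / δ') / η} := by
  refine ⟨1, one_pos, fun Ω m0 P _ 𝓕 R X hX _ hX0 hXR δ' η hδ' _ hη hηR => ?_⟩
  have hηR' : η * R ≤ 1 := ((lt_div_iff₀ (one_div_pos.mp (hη.trans hηR))).mp hηR).le
  set f := freedmanProcess η X fun ℓ => P[fun ω => X ℓ ω ^ 2|𝓕 (ℓ - 1)]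
  set bad := {ω | ∃ t, 1 / δ' ≤ f t ω}
  have hbad : P bad ≤ ENNReal.ofReal δ' := by
    simpa [bad] using (supermartingale_freedmanProcess hX hX0 hXR hη.le hηR').measure_exists_ge_le
      (fun t ω => (freedmanProcess_pos t ω).le) (one_div_pos.2 hδ')
  have hgood : badᶜ ⊆ {ω | ∀ t : ℕ, 1 ≤ t → ∑ ℓ ∈ Icc 1 t, X ℓ ω ≤
      η * ∑ ℓ ∈ Icc 1 t, (P[fun ω' => (X ℓ ω') ^ 2 | 𝓕 (ℓ - 1)]) ω +
        1 * Real.log ((t : ℝ) / δ') / η} := by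
    intro ω hω t ht
    have hlog : Real.log (1 / δ') ≤ Real.log (t / δ') :=
      Real.log_le_log (by positivity) (by gcongr; exact_mod_cast ht)
    rw [one_mul]
    calc _ ≤ _ := Real.le_mul_add_log_div_of_exp_lt hη (not_le.1 fun h => hω ⟨t, h⟩)
      _ ≤ _ := by gcongr
  calc ENNReal.ofReal (1 - δ') = 1 - ENNReal.ofReal δ' := by
        rw [ENNReal.ofReal_sub _ hδ'.le, ENNReal.ofReal_one]
    _ ≤ 1 - P bad := tsub_le_tsub_left hbad 1
    _ ≤ P badᶜ := tsub_le_iff_left.2 (by simpa using measure_univ_le_add_compl bad (μ := P))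
    _ ≤ _ := measure_mono hgood
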